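/- Let y* ∈ [2,3], z₀ ∈ [0,1), and let (ρ, ω) be an inner LP-type solution on (z₀, 1]. (a) If inf_{z ∈ (z₀,1)} ω(z) ≤ 1/3, then ρ(z) > ω(z) for all z ∈ (z₀, 1). (b) If moreover z₁ ∈ (z₀, 1) satisfies ω(z₁) = 1/3 and ω(z) > 1/3 for all z ∈ (z₁, 1), then ω(z) < 1/3 for all z ∈ (z₀, z₁). -/

import Mathlib

/-!
Put `φ = ρ - ω` and `ψ = ω - 1/3`. On `(z₀, 1)` the system reads
`φ' = a φ + 3ψ/z`, `ψ' = c φ - 3ψ/z` with `a` continuous and `c = 2y²zω²/(1 - y²z²ω²) > 0`. Hence no other solution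
reaches the equilibrium `ρ = ω = 1/3` (Grönwall), at a zero of `φ` the sign of `φ'` is that of `ψ`,
and at a zero of `ψ` the sign of `ψ'` is that of `φ`.

(a) Since `φ(1) = 0` and `φ'(1) = 1/y - 1 < 0`, `φ > 0` just left of `1`. If `φ` vanished in
`(z₀, 1)`, let `x` be its last zero. The sign rule excludes `ψ(x) < 0` and uniqueness excludes
`ψ(x) = 0`. If `ψ(x) > 0`, then right of `x`, where `φ > 0`, `ψ` only crosses zero upwards, so
`ω > 1/3` on `[x, 1]`; left of `x`, going backwards in `z`, the solution cannot leave
`{φ ≤ 0, ψ ≥ 0}`, where `ω' ≤ 0`, so `ω ≥ ω(x)` on `(z₀, x]`. Thus `ω` stays away from `1/3`,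
against the hypothesis on its infimum.

(b) Once `φ > 0`, every zero of `ψ` is an upward crossing, so `ψ < 0` left of `z₁`.
-/

/-- The rescaled self-similar isothermal Euler–Poisson system with parameter `y = y*`,
at the point `z`. -/
def EPSys (y : ℝ) (ρ ω : ℝ → ℝ) (z : ℝ) : Prop :=
  deriv ρ z =
    -(2 * y ^ 2 * z * ω z * ρ z * (ρ z - ω z)) / (1 - y ^ 2 * z ^ 2 * (ω z) ^ 2) ∧
  deriv ω z =
    (1 - 3 * ω z) / z +
      2 * y ^ 2 * z * (ω z) ^ 2 * (ρ z - ω z) / (1 - y ^ 2 * z ^ 2 * (ω z) ^ 2)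

/-- The multiplied form of the system, valid also at the sonic point. -/
def MultSys (y : ℝ) (ρ ω : ℝ → ℝ) (z : ℝ) : Prop :=
  deriv ρ z * (1 - y ^ 2 * z ^ 2 * (ω z) ^ 2)
    + 2 * y ^ 2 * z * ω z * ρ z * (ρ z - ω z) = 0 ∧
  z * deriv ω z * (1 - y ^ 2 * z ^ 2 * (ω z) ^ 2)
    - (1 - 3 * ω z) * (1 - y ^ 2 * z ^ 2 * (ω z) ^ 2)
    - 2 * y ^ 2 * z ^ 2 * (ω z) ^ 2 * (ρ z - ω z) = 0

/-- An inner LP-type solution on `(z₀, 1]`: continuous on `(z₀,1]`, real analytic on a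
left-neighbourhood of `z = 1` where it solves the multiplied system with the LP
conditions, differentiable on `(z₀,1)` where it solves the system, and subsonic there. -/
def InnerLPSol (y z₀ : ℝ) (ρ ω : ℝ → ℝ) : Prop :=
  ContinuousOn ρ (Set.Ioc z₀ 1) ∧ ContinuousOn ω (Set.Ioc z₀ 1) ∧
  (∃ r : ℝ, 0 < r ∧ r < 1 ∧
    AnalyticOnNhd ℝ ρ (Set.Ioc (1 - r) 1) ∧
    AnalyticOnNhd ℝ ω (Set.Ioc (1 - r) 1) ∧
    (∀ z ∈ Set.Ioc (1 - r) 1, MultSys y ρ ω z)) ∧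
  ρ 1 = 1 / y ∧ ω 1 = 1 / y ∧ deriv ρ 1 = -(1 / y) ∧ deriv ω 1 = 1 - 2 / y ∧
  (∀ z ∈ Set.Ioo z₀ 1,
    DifferentiableAt ℝ ρ z ∧ DifferentiableAt ℝ ω z ∧ EPSys y ρ ω z) ∧
  (∀ z ∈ Set.Ioo z₀ 1, 0 < 1 - y ^ 2 * z ^ 2 * (ω z) ^ 2)

open Set Filter Topology

section SignChanges

variable {g : ℝ → ℝ} {c x s t : ℝ}

theorem HasDerivAt.eventually_nhdsLT_lt (hg : HasDerivAt g c x) (hc : 0 < c) :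
    ∀ᶠ u in 𝓝[<] x, g u < g x := by
  have hslope := (hasDerivAt_iff_tendsto_slope.mp hg).mono_left (nhdsLT_le_nhdsNE x)
  filter_upwards [hslope.eventually_const_lt hc, self_mem_nhdsWithin] with u hu hux
  exact (slope_pos_iff_gt hux).mp hu

theorem HasDerivAt.eventually_nhdsGT_gt (hg : HasDerivAt g c x) (hc : 0 < c) :
    ∀ᶠ u in 𝓝[>] x, g x < g u := by
  have hslope := (hasDerivAt_iff_tendsto_slope.mp hg).mono_left (nhdsGT_le_nhdsNE x)
  filter_upwards [hslope.eventually_const_lt hc, self_mem_nhdsWithin] with u hu hxu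
  exact (slope_pos_iff hxu).mp hu

theorem HasDerivAt.eventually_nhdsLT_gt (hg : HasDerivAt g c x) (hc : c < 0) :
    ∀ᶠ u in 𝓝[<] x, g x < g u := by
  simpa using hg.neg.eventually_nhdsLT_lt (neg_pos.mpr hc)

theorem HasDerivAt.eventually_nhdsGT_lt (hg : HasDerivAt g c x) (hc : c < 0) :
    ∀ᶠ u in 𝓝[>] x, g u < g x := by
  simpa using hg.neg.eventually_nhdsGT_gt (neg_pos.mpr hc)

theorem isCompact_Icc_inter_preimage_zero (hg : ContinuousOn g (Icc s t)) :
    IsCompact (Icc s t ∩ g ⁻¹' {0}) :=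
  isCompact_Icc.of_isClosed_subset
    (hg.preimage_isClosed_of_isClosed isClosed_Icc isClosed_singleton) inter_subset_left

theorem nonneg_of_forall_zero_eventually_pos_left (hg : ContinuousOn g (Icc s t))
    (ht : 0 ≤ g t) (hzero : ∀ x ∈ Ioc s t, g x = 0 → ∀ᶠ u in 𝓝[<] x, 0 < g u) :
    ∀ v ∈ Icc s t, 0 ≤ g v := by
  intro v hv
  by_contra! hv0
  have hgv : ContinuousOn g (Icc v t) := hg.mono (Icc_subset_Icc_left hv.1)
  obtain ⟨x, ⟨hxI, hx0⟩, hxmin⟩ := (isCompact_Icc_inter_preimage_zero hgv).exists_isLeast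
    (intermediate_value_Icc hv.2 hgv ⟨hv0.le, ht⟩)
  have hvx : v < x := hxI.1.lt_of_ne (by rintro rfl; simp_all)
  obtain ⟨u, hu, hvu, hux⟩ :=
    ((hzero x ⟨hv.1.trans_lt hvx, hxI.2⟩ hx0).and (Ioo_mem_nhdsLT hvx)).exists
  obtain ⟨z, hz, hz0⟩ := intermediate_value_Icc hvu.le (hgv.mono (Icc_subset_Icc_right
    (hux.le.trans hxI.2))) ⟨hv0.le, hu.le⟩
  exact (hxmin ⟨⟨hz.1, hz.2.trans (hux.le.trans hxI.2)⟩, hz0⟩).not_gt (hz.2.trans_lt hux)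

theorem pos_of_nonneg_of_forall_zero_hasDerivAt_pos (hst : s < t) (hg : ContinuousOn g (Icc s t))
    (hs : 0 ≤ g s) (hzero : ∀ x ∈ Icc s t, g x = 0 → ∃ c > 0, HasDerivAt g c x) : 0 < g t := by
  by_contra! ht
  have hnonpos : ∀ v ∈ Icc s t, g v ≤ 0 := by
    have := nonneg_of_forall_zero_eventually_pos_left (g := -g) hg.neg (neg_nonneg.mpr ht)
      fun x hx hx0 => by
        obtain ⟨c, hc, hd⟩ := hzero x (Ioc_subset_Icc_self hx) (neg_eq_zero.mp hx0)
        filter_upwards [hd.eventually_nhdsLT_lt hc] with u hu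
        simp only [Pi.neg_apply, neg_eq_zero] at hx0 ⊢
        linarith
    simpa using this
  have hs0 : g s = 0 := le_antisymm (hnonpos s (left_mem_Icc.mpr hst.le)) hs
  obtain ⟨c, hc, hd⟩ := hzero s (left_mem_Icc.mpr hst.le) hs0
  obtain ⟨u, hu, hsu⟩ := ((hd.eventually_nhdsGT_gt hc).and (Ioo_mem_nhdsGT hst)).exists
  linarith [hnonpos u (Ioo_subset_Icc_self hsu)]

theorem exists_zero_forall_pos_Ioc (hst : s ≤ t) (hg : ContinuousOn g (Icc s t)) (hs : g s ≤ 0)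
    (ht : 0 < g t) : ∃ x ∈ Ico s t, g x = 0 ∧ ∀ u ∈ Ioc x t, 0 < g u := by
  obtain ⟨x, ⟨hxI, hx0⟩, hxmax⟩ := (isCompact_Icc_inter_preimage_zero hg).exists_isGreatest
    (intermediate_value_Icc hst hg ⟨hs, ht.le⟩)
  refine ⟨x, ⟨hxI.1, hxI.2.lt_of_ne (by rintro rfl; simp_all)⟩, hx0, fun u hu => ?_⟩
  by_contra! hu0
  obtain ⟨z, hz, hz0⟩ := intermediate_value_Icc hu.2 (hg.mono (Icc_subset_Icc_left
    (hxI.1.trans hu.1.le))) ⟨hu0, ht.le⟩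
  exact (hxmax ⟨⟨hxI.1.trans (hu.1.le.trans hz.1), hz.2⟩, hz0⟩).not_gt (hu.1.trans_le hz.1)

end SignChanges

theorem eq_zero_of_hasDerivAt_linear_system {f g a b c d : ℝ → ℝ} {s t : ℝ}
    (ha : ContinuousOn a (Icc s t)) (hb : ContinuousOn b (Icc s t))
    (hc : ContinuousOn c (Icc s t)) (hd : ContinuousOn d (Icc s t))
    (hf : ∀ u ∈ Icc s t, HasDerivAt f (a u * f u + b u * g u) u)
    (hg : ∀ u ∈ Icc s t, HasDerivAt g (c u * f u + d u * g u) u)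
    (hf₀ : f s = 0) (hg₀ : g s = 0) : ∀ u ∈ Icc s t, f u = 0 ∧ g u = 0 := by
  obtain ⟨K, hK⟩ := isCompact_Icc.exists_bound_of_continuousOn
    (((ha.abs.add hb.abs).add hc.abs).add hd.abs)
  have hbound : ∀ u ∈ Ico s t,
      ‖(a u * f u + b u * g u, c u * f u + d u * g u)‖ ≤ K * ‖(f u, g u)‖ := by
    intro u hu
    have hKu := (le_abs_self _).trans (hK u (Ico_subset_Icc_self hu))
    simp only [Pi.add_apply] at hKu
    have hfu : |f u| ≤ ‖(f u, g u)‖ := norm_fst_le (f u, g u)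
    have hgu : |g u| ≤ ‖(f u, g u)‖ := norm_snd_le (f u, g u)
    have hrow : ∀ p q : ℝ, |p| + |q| ≤ K → ‖p * f u + q * g u‖ ≤ K * ‖(f u, g u)‖ := by
      intro p q hpq
      calc ‖p * f u + q * g u‖ ≤ |p| * |f u| + |q| * |g u| := by
            simpa only [Real.norm_eq_abs, abs_mul] using abs_add_le (p * f u) (q * g u)
        _ ≤ (|p| + |q|) * ‖(f u, g u)‖ := by
            nlinarith [abs_nonneg p, abs_nonneg q]
        _ ≤ K * ‖(f u, g u)‖ := by gcongr
    exact max_le (hrow _ _ (by linarith [abs_nonneg (c u), abs_nonneg (d u)]))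
      (hrow _ _ (by linarith [abs_nonneg (a u), abs_nonneg (b u)]))
  intro u hu
  exact Prod.ext_iff.mp <| eq_zero_of_abs_deriv_le_mul_abs_self_of_eq_zero_right
    (f := fun u => (f u, g u))
    (fun v hv => ((hf v hv).continuousAt.prodMk (hg v hv).continuousAt).continuousWithinAt)
    (fun v hv => ((hf v (Ico_subset_Icc_self hv)).prodMk
      (hg v (Ico_subset_Icc_self hv))).hasDerivWithinAt)
    (Prod.ext hf₀ hg₀) hbound u hu

namespace InnerLPSol

variable {y z₀ : ℝ} {ρ ω : ℝ → ℝ} {x z : ℝ}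

theorem hasDerivAt_rho_sub_omega_of_eq (h : InnerLPSol y z₀ ρ ω) (hz : z ∈ Ioo z₀ 1)
    (hρω : ρ z = ω z) : HasDerivAt (fun t => ρ t - ω t) ((3 * ω z - 1) / z) z := by
  obtain ⟨-, -, -, -, -, -, -, hsol, -⟩ := h
  obtain ⟨hρ, hω, hρ', hω'⟩ := hsol z hz
  refine (hρ.hasDerivAt.sub hω.hasDerivAt).congr_deriv ?_
  rw [hρ', hω', hρω]
  ring

theorem deriv_omega_pos_of_eq_third (h : InnerLPSol y z₀ ρ ω) (hy : y ≠ 0) (hz₀ : 0 ≤ z₀)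
    (hz : z ∈ Ioo z₀ 1) (hω : ω z = 1 / 3) (hρ : ω z < ρ z) : 0 < deriv ω z := by
  obtain ⟨-, -, -, -, -, -, -, hsol, hsub⟩ := h
  have hz0 : 0 < z := hz₀.trans_lt hz.1
  have hfirst : (1 - 3 * ω z) / z = 0 := by rw [hω]; norm_num
  rw [(hsol z hz).2.2.2, hfirst, zero_add]
  exact div_pos (by have := sub_pos.mpr hρ; positivity) (hsub z hz)

theorem deriv_omega_neg_of_eq_third (h : InnerLPSol y z₀ ρ ω) (hy : y ≠ 0) (hz₀ : 0 ≤ z₀)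
    (hz : z ∈ Ioo z₀ 1) (hω : ω z = 1 / 3) (hρ : ρ z < ω z) : deriv ω z < 0 := by
  obtain ⟨-, -, -, -, -, -, -, hsol, hsub⟩ := h
  have hz0 : 0 < z := hz₀.trans_lt hz.1
  have hfirst : (1 - 3 * ω z) / z = 0 := by rw [hω]; norm_num
  rw [(hsol z hz).2.2.2, hfirst, zero_add]
  refine div_neg_of_neg_of_pos (mul_neg_of_pos_of_neg (by positivity) ?_) (hsub z hz)
  linarith

theorem eq_third_of_eq_third (h : InnerLPSol y z₀ ρ ω) (hz₀ : 0 ≤ z₀) {p q : ℝ} (hp : z₀ < p)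
    (hq : q < 1) (hρp : ρ p = 1 / 3) (hωp : ω p = 1 / 3) :
    ∀ u ∈ Icc p q, ρ u = 1 / 3 ∧ ω u = 1 / 3 := by
  obtain ⟨hρc, hωc, -, -, -, -, -, hsol, hsub⟩ := h
  have hIoo : Icc p q ⊆ Ioo z₀ 1 := fun u hu => ⟨hp.trans_le hu.1, hu.2.trans_lt hq⟩
  have hIoc : Icc p q ⊆ Ioc z₀ 1 := hIoo.trans Ioo_subset_Ioc_self
  have hne : ∀ u ∈ Icc p q, u ≠ 0 := fun u hu => (hz₀.trans_lt (hIoo hu).1).ne'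
  have hD : ∀ u ∈ Icc p q, 1 - y ^ 2 * u ^ 2 * ω u ^ 2 ≠ 0 := fun u hu => (hsub u (hIoo hu)).ne'
  have hρc := hρc.mono hIoc
  have hωc := hωc.mono hIoc
  have key := eq_zero_of_hasDerivAt_linear_system (f := fun u => ρ u - ω u)
    (g := fun u => ω u - 1 / 3)
    (a := fun u => -(2 * y ^ 2 * u * ω u * (ρ u + ω u)) / (1 - y ^ 2 * u ^ 2 * ω u ^ 2))
    (b := fun u => 3 / u) (c := fun u => 2 * y ^ 2 * u * ω u ^ 2 / (1 - y ^ 2 * u ^ 2 * ω u ^ 2))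
    (d := fun u => -3 / u) (by fun_prop (disch := assumption)) (by fun_prop (disch := assumption))
    (by fun_prop (disch := assumption)) (by fun_prop (disch := assumption))
    (fun u hu => by
      obtain ⟨hρ, hω, hρ', hω'⟩ := hsol u (hIoo hu)
      refine (hρ.hasDerivAt.sub hω.hasDerivAt).congr_deriv ?_
      rw [hρ', hω']
      field_simp [hne u hu, hD u hu]
      ring)
    (fun u hu => by
      obtain ⟨-, hω, -, hω'⟩ := hsol u (hIoo hu)
      refine (hω.hasDerivAt.sub_const (1 / 3)).congr_deriv ?_
      rw [hω']
      field_simp [hne u hu, hD u hu]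
      ring)
    (by simp [hρp, hωp]) (by simp [hωp])
  intro u hu
  obtain ⟨h1, h2⟩ := key u hu
  constructor <;> linarith

theorem exists_omega_lt_rho_near_one (h : InnerLPSol y z₀ ρ ω) (hy : 1 < y) :
    ∃ c < 1, ∀ u ∈ Ioo c 1, ω u < ρ u := by
  obtain ⟨-, -, ⟨r, hr, -, hρa, hωa, -⟩, hρ1, hω1, hρ'1, hω'1, -, -⟩ := h
  have h1 : (1 : ℝ) ∈ Ioc (1 - r) 1 := ⟨by linarith, le_rfl⟩
  have hd : HasDerivAt (fun t => ρ t - ω t) (-(1 / y) - (1 - 2 / y)) 1 := by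
    have := (hρa 1 h1).differentiableAt.hasDerivAt.sub (hωa 1 h1).differentiableAt.hasDerivAt
    rwa [hρ'1, hω'1] at this
  have hneg : -(1 / y) - (1 - 2 / y) < 0 := by
    have : 1 / y < 1 := (div_lt_one (by linarith)).mpr hy
    linarith [show 2 / y = 2 * (1 / y) by ring]
  obtain ⟨c, hc, hsub⟩ := mem_nhdsLT_iff_exists_Ioo_subset.mp (hd.eventually_nhdsLT_gt hneg)
  refine ⟨c, hc, fun u hu => ?_⟩
  have := hsub hu
  simp only [mem_ofPred_eq, hρ1, hω1, sub_self] at this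
  linarith

theorem third_lt_omega_right (h : InnerLPSol y z₀ ρ ω) (hy : y ≠ 0) (hz₀ : 0 ≤ z₀)
    (hx : x ∈ Ioo z₀ 1) (hωx : 1 / 3 < ω x) (hright : ∀ u ∈ Ioo x 1, ω u < ρ u) :
    ∀ t ∈ Icc x 1, 1 / 3 < ω t := by
  obtain ⟨-, hωc, ⟨r, hr, -, -, hωa, -⟩, -, hω1, -, hω'1, hsol, -⟩ := id h
  intro t ht
  rcases ht.1.eq_or_lt with rfl | hxt
  · exact hωx
  suffices 0 < ω t - 1 / 3 by linarith
  refine pos_of_nonneg_of_forall_zero_hasDerivAt_pos (g := fun u => ω u - 1 / 3) hxt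
    ((hωc.mono fun u hu => ⟨hx.1.trans_le hu.1, hu.2.trans ht.2⟩).sub continuousOn_const)
    (by linarith) fun u hu hu0 => ?_
  have hωu : ω u = 1 / 3 := sub_eq_zero.mp hu0
  rcases (hu.2.trans ht.2).lt_or_eq with hu1 | rfl
  · have hxu : x < u := hu.1.lt_of_ne (by rintro rfl; linarith)
    exact ⟨_, h.deriv_omega_pos_of_eq_third hy hz₀ ⟨hx.1.trans hxu, hu1⟩ hωu
      (hright u ⟨hxu, hu1⟩), (hsol u ⟨hx.1.trans hxu, hu1⟩).2.1.hasDerivAt.sub_const _⟩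
  · -- `ω 1 = 1/3` forces `y = 3`, where `ω' 1 = 1/3`.
    have hd := (hωa 1 ⟨by linarith, le_rfl⟩).differentiableAt.hasDerivAt.sub_const (1 / 3 : ℝ)
    refine ⟨_, ?_, hd⟩
    rw [hω'1, show 2 / y = 2 * (1 / y) by ring, ← hω1, hωu]
    norm_num

theorem rho_le_omega_and_third_le_omega_left (h : InnerLPSol y z₀ ρ ω) (hy : y ≠ 0)
    (hz₀ : 0 ≤ z₀) (hx : x ∈ Ioo z₀ 1) (hρx : ρ x = ω x) (hωx : 1 / 3 < ω x) :
    ∀ u ∈ Ioc z₀ x, ρ u ≤ ω u ∧ 1 / 3 ≤ ω u := by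
  obtain ⟨hρc, hωc, -, -, -, -, -, hsol, -⟩ := id h
  intro u hu
  have hI : Icc u x ⊆ Ioo z₀ 1 := fun v hv => ⟨hu.1.trans_le hv.1, hv.2.trans_lt hx.2⟩
  suffices 0 ≤ min (ω u - ρ u) (ω u - 1 / 3) by
    obtain ⟨h1, h2⟩ := le_min_iff.mp this
    constructor <;> linarith
  refine nonneg_of_forall_zero_eventually_pos_left (g := fun v => min (ω v - ρ v) (ω v - 1 / 3))
    ((by fun_prop : ContinuousOn (fun v => min (ω v - ρ v) (ω v - 1 / 3)) (Ioc z₀ 1)).mono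
      (hI.trans Ioo_subset_Ioc_self))
    (le_min (by rw [hρx, sub_self]) (by linarith)) (fun v hv hv0 => ?_) u ⟨le_rfl, hu.2⟩
  have hvI : v ∈ Ioo z₀ 1 := hI (Ioc_subset_Icc_self hv)
  obtain ⟨hρd, hωd, -⟩ := hsol v hvI
  have hnear : ∀ k : ℝ → ℝ, ContinuousAt k v → 0 < k v → ∀ᶠ w in 𝓝[<] v, 0 < k w :=
    fun k hk hkv => (hk.eventually (lt_mem_nhds hkv)).filter_mono nhdsWithin_le_nhds
  obtain ⟨hf, hψ⟩ := le_min_iff.mp hv0.ge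
  rcases hf.eq_or_lt with hf0 | hfpos <;> rcases hψ.eq_or_lt with hψ0 | hψpos
  · have := (h.eq_third_of_eq_third hz₀ hvI.1 hx.2 (by linarith) (by linarith) x
      ⟨hv.2, le_rfl⟩).2
    linarith
  · have hd := h.hasDerivAt_rho_sub_omega_of_eq hvI (by linarith)
    filter_upwards [hd.eventually_nhdsLT_lt (div_pos (by linarith) (hz₀.trans_lt hvI.1)),
      hnear _ (hωd.continuousAt.sub continuousAt_const) hψpos] with w hw hw'
    exact lt_min (by linarith) hw'
  · have hd := h.deriv_omega_neg_of_eq_third hy hz₀ hvI (by linarith) (by linarith)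
    filter_upwards [hωd.hasDerivAt.eventually_nhdsLT_gt hd,
      hnear _ (hωd.continuousAt.sub hρd.continuousAt) hfpos] with w hw hw'
    exact lt_min hw' (by linarith)
  · exact absurd hv0 (lt_min hfpos hψpos).ne'

theorem omega_le_left (h : InnerLPSol y z₀ ρ ω) (hy : y ≠ 0) (hz₀ : 0 ≤ z₀)
    (hx : x ∈ Ioo z₀ 1) (hρx : ρ x = ω x) (hωx : 1 / 3 < ω x) :
    ∀ u ∈ Ioc z₀ x, ω x ≤ ω u := by
  obtain ⟨-, hωc, -, -, -, -, -, hsol, hsub⟩ := id h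
  intro u hu
  have hI : Icc u x ⊆ Ioo z₀ 1 := fun v hv => ⟨hu.1.trans_le hv.1, hv.2.trans_lt hx.2⟩
  refine antitoneOn_of_deriv_nonpos (convex_Icc u x) (hωc.mono (hI.trans Ioo_subset_Ioc_self))
    (fun v hv => (hsol v (hI (interior_subset hv))).2.1.differentiableWithinAt)
    (fun v hv => ?_) ⟨le_rfl, hu.2⟩ ⟨hu.2, le_rfl⟩ hu.2
  rw [interior_Icc] at hv
  have hvI : v ∈ Ioo z₀ 1 := hI (Ioo_subset_Icc_self hv)
  obtain ⟨hρω, h13⟩ := h.rho_le_omega_and_third_le_omega_left hy hz₀ hx hρx hωx v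
    ⟨hvI.1, hv.2.le⟩
  have hv0 : 0 < v := hz₀.trans_lt hvI.1
  rw [(hsol v hvI).2.2.2]
  have h1 : (1 - 3 * ω v) / v ≤ 0 := div_nonpos_of_nonpos_of_nonneg (by linarith) hv0.le
  have h2 : 2 * y ^ 2 * v * ω v ^ 2 * (ρ v - ω v) / (1 - y ^ 2 * v ^ 2 * ω v ^ 2) ≤ 0 :=
    div_nonpos_of_nonpos_of_nonneg
      (mul_nonpos_of_nonneg_of_nonpos (by positivity) (by linarith)) (hsub v hvI).le
  linarith

theorem exists_third_lt_forall_le_omega (h : InnerLPSol y z₀ ρ ω) (hy : y ≠ 0) (hz₀ : 0 ≤ z₀)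
    (hx : x ∈ Ioo z₀ 1) (hρx : ρ x = ω x) (hωx : 1 / 3 < ω x)
    (hright : ∀ u ∈ Ioo x 1, ω u < ρ u) : ∃ m > 1 / 3, ∀ z ∈ Ioo z₀ 1, m ≤ ω z := by
  obtain ⟨t, ht, htmin⟩ := isCompact_Icc.exists_isMinOn (nonempty_Icc.mpr hx.2.le)
    (h.2.1.mono fun u hu => ⟨hx.1.trans_le hu.1, hu.2⟩)
  refine ⟨ω t, h.third_lt_omega_right hy hz₀ hx hωx hright t ht, fun z hz => ?_⟩
  rcases le_or_gt z x with hzx | hxz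
  · exact (htmin ⟨le_rfl, hx.2.le⟩).trans (h.omega_le_left hy hz₀ hx hρx hωx z ⟨hz.1, hzx⟩)
  · exact htmin ⟨hxz.le, hz.2.le⟩

theorem rho_ne_omega_of_forall_omega_lt_rho_right (h : InnerLPSol y z₀ ρ ω) (hy : y ≠ 0)
    (hz₀ : 0 ≤ z₀) (hinf : ∀ ε : ℝ, 0 < ε → ∃ z ∈ Ioo z₀ 1, ω z < 1 / 3 + ε)
    (hx : x ∈ Ioo z₀ 1) (hright : ∀ u ∈ Ioo x 1, ω u < ρ u) : ρ x ≠ ω x := by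
  intro hρx
  rcases lt_trichotomy (ω x) (1 / 3) with hlt | heq | hgt
  · have hneg : (3 * ω x - 1) / x < 0 := div_neg_of_neg_of_pos (by linarith) (hz₀.trans_lt hx.1)
    obtain ⟨u, hu, hxu⟩ := (((h.hasDerivAt_rho_sub_omega_of_eq hx hρx).eventually_nhdsGT_lt
      hneg).and (Ioo_mem_nhdsGT hx.2)).exists
    linarith [hright u hxu]
  · have hq : (x + 1) / 2 ∈ Ioo x 1 := ⟨by linarith [hx.2], by linarith [hx.2]⟩
    obtain ⟨hρq, hωq⟩ := h.eq_third_of_eq_third hz₀ hx.1 hq.2 (hρx.trans heq) heq _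
      ⟨hq.1.le, le_rfl⟩
    linarith [hright _ hq]
  · obtain ⟨m, hm, hmle⟩ := h.exists_third_lt_forall_le_omega hy hz₀ hx hρx hgt hright
    obtain ⟨z, hz, hzm⟩ := hinf (m - 1 / 3) (by linarith)
    linarith [hmle z hz]

theorem omega_lt_rho (h : InnerLPSol y z₀ ρ ω) (hy : 1 < y) (hz₀ : 0 ≤ z₀)
    (hinf : ∀ ε : ℝ, 0 < ε → ∃ z ∈ Ioo z₀ 1, ω z < 1 / 3 + ε) :
    ∀ z ∈ Ioo z₀ 1, ω z < ρ z := by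
  by_contra! ⟨w, hw, hwle⟩
  obtain ⟨c, hc1, hc⟩ := h.exists_omega_lt_rho_near_one hy
  obtain ⟨m, hcwm, hm1⟩ := exists_between (max_lt hc1 hw.2)
  obtain ⟨hcm, hwm⟩ := max_lt_iff.mp hcwm
  obtain ⟨x, hx, hx0, hxpos⟩ := exists_zero_forall_pos_Ioc (g := fun u => ρ u - ω u) hwm.le
    ((h.1.sub h.2.1).mono fun u hu => ⟨hw.1.trans_le hu.1, hu.2.trans hm1.le⟩)
    (by simpa using hwle) (by simpa using hc m ⟨hcm, hm1⟩)
  refine h.rho_ne_omega_of_forall_omega_lt_rho_right (by positivity) hz₀ hinf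
    ⟨hw.1.trans_le hx.1, hx.2.trans hm1⟩ (fun u hu => ?_) (sub_eq_zero.mp hx0)
  rcases le_or_gt u m with hum | hmu
  · exact sub_pos.mp (hxpos u ⟨hu.1, hum⟩)
  · exact hc u ⟨hcm.trans hmu, hu.2⟩

theorem omega_lt_third_left (h : InnerLPSol y z₀ ρ ω) (hy : y ≠ 0) (hz₀ : 0 ≤ z₀)
    (hpos : ∀ z ∈ Ioo z₀ 1, ω z < ρ z) {z₁ : ℝ} (hz₁ : z₁ ∈ Ioo z₀ 1) (hω₁ : ω z₁ = 1 / 3) :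
    ∀ z ∈ Ioo z₀ z₁, ω z < 1 / 3 := by
  obtain ⟨-, hωc, -, -, -, -, -, hsol, -⟩ := id h
  intro z hz
  by_contra! hge
  have hI : Icc z z₁ ⊆ Ioo z₀ 1 := fun u hu => ⟨hz.1.trans_le hu.1, hu.2.trans_lt hz₁.2⟩
  have := pos_of_nonneg_of_forall_zero_hasDerivAt_pos (g := fun u => ω u - 1 / 3) hz.2
    ((hωc.mono (hI.trans Ioo_subset_Ioc_self)).sub continuousOn_const) (sub_nonneg.mpr hge)
    fun u hu hu0 => ⟨_, h.deriv_omega_pos_of_eq_third hy hz₀ (hI hu) (sub_eq_zero.mp hu0)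
      (hpos u (hI hu)), (hsol u (hI hu)).2.1.hasDerivAt.sub_const _⟩
  simp only [hω₁, sub_self, lt_self_iff_false] at this

end InnerLPSol

/-- (a) If the infimum of `ω` on `(z₀,1)` is at most `1/3`, then `ρ > ω` there.
(b) If moreover `ω` first reaches `1/3` at `z₁`, then `ω < 1/3` on `(z₀, z₁)`. -/
theorem inner_solution_below_friedman
    (y z₀ : ℝ) (hy : y ∈ Set.Icc (2 : ℝ) 3) (hz₀ : z₀ ∈ Set.Ico (0 : ℝ) 1)
    (ρ ω : ℝ → ℝ) (h : InnerLPSol y z₀ ρ ω) :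
    ((∀ ε : ℝ, 0 < ε → ∃ z ∈ Set.Ioo z₀ 1, ω z < 1 / 3 + ε) →
      ∀ z ∈ Set.Ioo z₀ 1, ω z < ρ z) ∧
    ((∀ ε : ℝ, 0 < ε → ∃ z ∈ Set.Ioo z₀ 1, ω z < 1 / 3 + ε) →
      ∀ z₁ ∈ Set.Ioo z₀ 1, ω z₁ = 1 / 3 →
        (∀ z ∈ Set.Ioo z₁ 1, 1 / 3 < ω z) →
        ∀ z ∈ Set.Ioo z₀ z₁, ω z < 1 / 3) := by
  have hy1 : 1 < y := by linarith [hy.1]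
  refine ⟨h.omega_lt_rho hy1 hz₀.1, fun hinf z₁ hz₁ hω₁ _ => ?_⟩
  exact h.omega_lt_third_left (by positivity) hz₀.1 (h.omega_lt_rho hy1 hz₀.1 hinf) hz₁ hω₁
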